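/- Let σ > 0, R > 0, p ≥ 1, and f ∈ L_{p,loc}(ℝ^d). Define g(x) = ∫_{|y| > R³} f(x+y) |y|^{−(d+σ)} dy. Then the L_p-average of g over the ball B_{R³} satisfies ( ⨍_{B_{R³}} |g|^p )^{1/p} ≤ N(d,σ) R^{−3σ} Σ_{k=0}^∞ 2^{−3kσ} ( ⨍_{B_{(2^k R)³}} |f|^p )^{1/p}. -/

import Mathlib

open MeasureTheory Filter Metric Set
open scoped ENNReal NNReal Topology

lemma stmt3_holder_aux {α : Type*} [MeasurableSpace α] (ν : Measure α) {h : α → ℝ≥0∞}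
    (hm : AEMeasurable h ν) {p : ℝ} (hp : 1 ≤ p) (h0 : ν univ ≠ 0) (ht : ν univ ≠ ∞) :
    ∫⁻ x, h x ∂ν ≤ ν univ * ((∫⁻ x, h x ^ p ∂ν) / ν univ) ^ (1/p) := by
  set T := ν univ with hT
  rcases eq_or_lt_of_le hp with hp1 | hp1
  · subst hp1
    simp only [ENNReal.rpow_one, one_div_one]
    rw [ENNReal.mul_div_cancel h0 ht]
  · have hpq : p.HolderConjugate (p / (p-1)) := Real.HolderConjugate.conjExponent hp1
    set q := p / (p-1) with hq
    have key : ∫⁻ x, h x ∂ν ≤ (∫⁻ x, h x ^ p ∂ν) ^ (1/p) * T ^ (1/q) := by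
      have := ENNReal.lintegral_mul_le_Lp_mul_Lq ν hpq hm (aemeasurable_const (b := (1:ℝ≥0∞)))
      simpa using this
    refine key.trans_eq ?_
    have h1q : (1:ℝ)/q = 1 - 1/p := by
      have := hpq.inv_add_inv_eq_one
      rw [one_div, one_div]; linarith
    have hTq : T ^ ((1:ℝ)/q) = T / T ^ ((1:ℝ)/p) := by
      rw [h1q, ENNReal.rpow_sub 1 (1/p) h0 ht, ENNReal.rpow_one]
    rw [ENNReal.div_rpow_of_nonneg _ _ (by positivity), hTq]
    simp only [div_eq_mul_inv]
    ring

lemma stmt3_real_calc (d : ℕ) (σ R : ℝ) (hR : 0 < R) (k : ℕ) :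
    ((2:ℝ)^(3*k) * R^3) ^ (-((d:ℝ)+σ)) * (((2:ℝ)^(k+2) * R)^3)^d
      = (2:ℝ)^(6*(d:ℝ)+6*σ) * R^(-3*σ) * (2:ℝ)^(-3*((k:ℝ)+2)*σ) := by
  have h2 : (0:ℝ) < 2 := by norm_num
  have hR0 : (0:ℝ) ≤ R := hR.le
  rw [show (((2:ℝ)^(k+2) * R)^3)^d = 2^((k+2)*(3*d)) * R^(3*d) by
    rw [← pow_mul, mul_pow, ← pow_mul]]
  rw [Real.mul_rpow (by positivity) (by positivity)]
  rw [← Real.rpow_natCast (2:ℝ) (3*k), ← Real.rpow_natCast R 3,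
      ← Real.rpow_natCast (2:ℝ) ((k+2)*(3*d)), ← Real.rpow_natCast R (3*d),
      ← Real.rpow_mul h2.le, ← Real.rpow_mul hR0]
  rw [mul_mul_mul_comm, ← Real.rpow_add h2, ← Real.rpow_add hR]
  rw [mul_right_comm ((2:ℝ)^(6*(d:ℝ)+6*σ)), ← Real.rpow_add h2]
  congr 1
  · congr 1
    push_cast
    ring
  · push_cast
    ring

/-- Let `σ > 0`, `R > 0`, `p ≥ 1`, and `f ∈ L_{p,loc}(ℝ^d)`.  For
`g(x) = ∫_{|y|>R³} f(x+y)|y|^{−(d+σ)} dy`, the `L_p` average of `g` over `B_{R³}` is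
bounded by `N(d,σ) R^{−3σ} ∑_k 2^{−3kσ} (⨍_{B_{(2^k R)³}} |f|^p)^{1/p}`
(the right-hand side being allowed to be infinite). -/
theorem stmt3 (d : ℕ) (hd : 0 < d) (σ : ℝ) (hσ : 0 < σ) :
    ∃ N : ℝ, 0 < N ∧
      ∀ R : ℝ, 0 < R → ∀ p : ℝ, 1 ≤ p →
      ∀ f : EuclideanSpace ℝ (Fin d) → ℝ, LocallyIntegrable f volume →
        (⨍⁻ x in ball (0 : EuclideanSpace ℝ (Fin d)) (R^3),
            (‖∫ y in {y : EuclideanSpace ℝ (Fin d) | R^3 < ‖y‖},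
              f (x + y) * ‖y‖ ^ (-((d : ℝ) + σ))‖₊ : ℝ≥0∞) ^ p ∂volume) ^ (1/p)
          ≤ ENNReal.ofReal (N * R ^ (-3*σ)) *
            ∑' k : ℕ, ENNReal.ofReal ((2 : ℝ) ^ (-3*(k : ℝ)*σ)) *
              (⨍⁻ x in ball (0 : EuclideanSpace ℝ (Fin d)) ((2^k * R)^3),
                (‖f x‖₊ : ℝ≥0∞) ^ p ∂volume) ^ (1/p) := by
  classical
  set E := EuclideanSpace ℝ (Fin d) with hE
  set V1 : ℝ≥0∞ := volume (ball (0 : E) 1) with hV1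
  have hV1pos : 0 < V1 := measure_ball_pos _ _ one_pos
  have hV1top : V1 < ∞ := measure_ball_lt_top
  refine ⟨2^(6*(d:ℝ)+6*σ) * V1.toReal, by
    have := ENNReal.toReal_pos hV1pos.ne' hV1top.ne
    positivity, ?_⟩
  set N : ℝ := 2^(6*(d:ℝ)+6*σ) * V1.toReal with hN
  intro R hR p hp f hf
  have hp0 : (0:ℝ) < p := lt_of_lt_of_le one_pos hp
  have hR3 : (0:ℝ) < R^3 := by positivity
  have hmeas : AEMeasurable (fun z => (‖f z‖₊ : ℝ≥0∞)) (volume : Measure E) :=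
    hf.aestronglyMeasurable.enorm
  set a : ℕ → ℝ≥0∞ := fun m =>
    (⨍⁻ x in ball (0 : E) ((2^m * R)^3), (‖f x‖₊ : ℝ≥0∞) ^ p ∂volume) ^ (1/p) with ha
  set M : ℝ≥0∞ := ENNReal.ofReal (N * R ^ (-3*σ)) *
      ∑' k : ℕ, ENNReal.ofReal ((2 : ℝ) ^ (-3*(k : ℝ)*σ)) * a k with hM
  -- annuli
  set A : ℕ → Set E := fun k =>
    {y : E | 2^(3*k) * R^3 < ‖y‖ ∧ ‖y‖ ≤ 2^(3*(k+1)) * R^3} with hA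
  have hAmeas : ∀ k, MeasurableSet (A k) := by
    intro k
    have : A k = (fun y : E => ‖y‖) ⁻¹' (Ioc (2^(3*k)*R^3) (2^(3*(k+1))*R^3)) := rfl
    rw [this]
    exact measurable_norm measurableSet_Ioc
  have hSsub : {y : E | R^3 < ‖y‖} ⊆ ⋃ k, A k := by
    intro y hy
    simp only [mem_setOf_eq] at hy
    have hex : ∃ n, ‖y‖ ≤ 2^(3*n) * R^3 := by
      obtain ⟨n, hn⟩ := pow_unbounded_of_one_lt (‖y‖ / R^3) (by norm_num : (1:ℝ) < 8)
      refine ⟨n, ?_⟩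
      rw [div_lt_iff₀ hR3] at hn
      have h8 : ((8:ℝ))^n = 2^(3*n) := by
        rw [pow_mul]; norm_num
      nlinarith
    have hn0ne : Nat.find hex ≠ 0 := by
      intro h0
      have := Nat.find_spec hex
      rw [h0] at this
      simp only [Nat.mul_zero, pow_zero, one_mul] at this
      linarith
    obtain ⟨k, hk⟩ : ∃ k, Nat.find hex = k + 1 :=
      ⟨Nat.find hex - 1, (Nat.succ_pred_eq_of_pos (Nat.pos_of_ne_zero hn0ne)).symm⟩
    refine mem_iUnion.2 ⟨k, ?_, ?_⟩
    · have := Nat.find_min hex (lt_of_lt_of_eq (Nat.lt_succ_self k) hk.symm)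
      exact not_le.mp this
    · have := Nat.find_spec hex
      rw [hk] at this
      exact this
  -- the pointwise claim
  have claim : ∀ x ∈ ball (0 : E) (R^3),
      (‖∫ y in {y : E | R^3 < ‖y‖}, f (x + y) * ‖y‖ ^ (-((d : ℝ) + σ))‖₊ : ℝ≥0∞) ≤ M := by
    intro x hx
    rw [mem_ball_zero_iff] at hx
    have step1 : (‖∫ y in {y : E | R^3 < ‖y‖}, f (x + y) * ‖y‖ ^ (-((d : ℝ) + σ))‖₊ : ℝ≥0∞)
        ≤ ∫⁻ y in {y : E | R^3 < ‖y‖},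
            (‖f (x+y)‖₊ : ℝ≥0∞) * ENNReal.ofReal (‖y‖ ^ (-((d:ℝ)+σ))) ∂volume := by
      refine (enorm_integral_le_lintegral_enorm _).trans (le_of_eq (lintegral_congr fun y => ?_))
      rw [enorm_mul, Real.enorm_eq_ofReal (Real.rpow_nonneg (norm_nonneg _) _), enorm_eq_nnnorm]
    have step2 : ∫⁻ y in {y : E | R^3 < ‖y‖},
            (‖f (x+y)‖₊ : ℝ≥0∞) * ENNReal.ofReal (‖y‖ ^ (-((d:ℝ)+σ))) ∂volume
        ≤ ∑' k, ∫⁻ y in A k,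
            (‖f (x+y)‖₊ : ℝ≥0∞) * ENNReal.ofReal (‖y‖ ^ (-((d:ℝ)+σ))) ∂volume :=
      (lintegral_mono_set hSsub).trans (lintegral_iUnion_le _ _)
    have step3 : ∀ k, ∫⁻ y in A k,
            (‖f (x+y)‖₊ : ℝ≥0∞) * ENNReal.ofReal (‖y‖ ^ (-((d:ℝ)+σ))) ∂volume
        ≤ ENNReal.ofReal ((2^(3*k) * R^3) ^ (-((d:ℝ)+σ))) *
            ∫⁻ z in ball (0 : E) ((2^(k+2) * R)^3), (‖f z‖₊ : ℝ≥0∞) ∂volume := by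
      intro k
      have hbd1 : ∫⁻ y in A k,
              (‖f (x+y)‖₊ : ℝ≥0∞) * ENNReal.ofReal (‖y‖ ^ (-((d:ℝ)+σ))) ∂volume
          ≤ ∫⁻ y in A k, ENNReal.ofReal ((2^(3*k) * R^3) ^ (-((d:ℝ)+σ))) *
              (‖f (x+y)‖₊ : ℝ≥0∞) ∂volume := by
        refine lintegral_mono_ae ((ae_restrict_iff' (hAmeas k)).2
          (Eventually.of_forall fun y hy => ?_))
        rw [mul_comm]
        refine mul_le_mul_left (ENNReal.ofReal_le_ofReal ?_) _
        exact Real.rpow_le_rpow_of_nonpos (by positivity) hy.1.le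
          (by have : (0:ℝ) ≤ (d:ℝ) := Nat.cast_nonneg d; linarith)
      refine hbd1.trans ?_
      rw [lintegral_const_mul' _ _ ENNReal.ofReal_ne_top]
      refine mul_le_mul_right ?_ _
      -- translate and enlarge
      have hmem : ∀ y ∈ A k, x + y ∈ ball (0 : E) ((2^(k+2) * R)^3) := by
        intro y hy
        rw [mem_ball_zero_iff]
        have h1 : ‖x + y‖ ≤ ‖x‖ + ‖y‖ := norm_add_le _ _
        have h2 : ((2:ℝ)^(k+2) * R)^3 = 2^(3*(k+2)) * R^3 := by ring
        have h3 : (1:ℝ) ≤ 2^(3*k) := one_le_pow₀ (by norm_num)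
        have hy2 := hy.2
        rw [h2]
        have e1 : (2:ℝ)^(3*(k+1)) = 8 * 2^(3*k) := by ring
        have e2 : (2:ℝ)^(3*(k+2)) = 64 * 2^(3*k) := by ring
        rw [e1] at hy2
        rw [e2]
        nlinarith
      have hsub : ∀ y ∈ A k, (‖f (x+y)‖₊ : ℝ≥0∞) ≤
          (ball (0:E) ((2^(k+2) * R)^3)).indicator (fun z => (‖f z‖₊ : ℝ≥0∞)) (x+y) := by
        intro y hy
        rw [indicator_of_mem (hmem y hy)]
      calc ∫⁻ y in A k, (‖f (x+y)‖₊ : ℝ≥0∞) ∂volume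
          ≤ ∫⁻ y in A k, (ball (0:E) ((2^(k+2) * R)^3)).indicator
              (fun z => (‖f z‖₊ : ℝ≥0∞)) (x+y) ∂volume :=
            lintegral_mono_ae ((ae_restrict_iff' (hAmeas k)).2 (Eventually.of_forall hsub))
        _ ≤ ∫⁻ y, (ball (0:E) ((2^(k+2) * R)^3)).indicator
              (fun z => (‖f z‖₊ : ℝ≥0∞)) (x+y) ∂volume := setLIntegral_le_lintegral _ _
        _ = ∫⁻ z, (ball (0:E) ((2^(k+2) * R)^3)).indicator
              (fun z => (‖f z‖₊ : ℝ≥0∞)) z ∂volume :=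
            lintegral_add_left_eq_self
              (fun z => (ball (0:E) ((2^(k+2) * R)^3)).indicator
                (fun z => (‖f z‖₊ : ℝ≥0∞)) z) x
        _ = ∫⁻ z in ball (0:E) ((2^(k+2) * R)^3), (‖f z‖₊ : ℝ≥0∞) ∂volume := by
            rw [lintegral_indicator measurableSet_ball]
    have step4 : ∀ k, ∫⁻ z in ball (0 : E) ((2^(k+2) * R)^3), (‖f z‖₊ : ℝ≥0∞) ∂volume
        ≤ volume (ball (0 : E) ((2^(k+2) * R)^3)) * a (k+2) := by
      intro k
      have hball0 : volume (ball (0 : E) ((2^(k+2) * R)^3)) ≠ 0 :=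
        (measure_ball_pos _ _ (by positivity)).ne'
      have hballt : volume (ball (0 : E) ((2^(k+2) * R)^3)) ≠ ∞ := measure_ball_lt_top.ne
      have := stmt3_holder_aux ((volume : Measure E).restrict (ball (0:E) ((2^(k+2) * R)^3)))
        hmeas.restrict hp (by rwa [Measure.restrict_apply_univ])
        (by rwa [Measure.restrict_apply_univ])
      rw [Measure.restrict_apply_univ] at this
      refine this.trans_eq ?_
      congr 1
      rw [ha]
      simp only [setLAverage_eq]
    have step5 : ∀ k, ENNReal.ofReal ((2^(3*k) * R^3) ^ (-((d:ℝ)+σ))) *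
          (volume (ball (0 : E) ((2^(k+2) * R)^3)) * a (k+2))
        ≤ ENNReal.ofReal (N * R ^ (-3*σ)) *
            (ENNReal.ofReal ((2 : ℝ) ^ (-3*((k+2 : ℕ) : ℝ)*σ)) * a (k+2)) := by
      intro k
      have hvol : volume (ball (0 : E) ((2^(k+2) * R)^3))
          = ENNReal.ofReal (((2^(k+2) * R)^3 : ℝ)^d) * V1 := by
        rw [hV1, Measure.addHaar_ball_of_pos _ _ (by positivity)]
        congr 2
        rw [show Module.finrank ℝ E = d from finrank_euclideanSpace_fin]
      have key : ENNReal.ofReal ((2^(3*k) * R^3) ^ (-((d:ℝ)+σ))) *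
          (ENNReal.ofReal (((2^(k+2) * R)^3 : ℝ)^d) * V1)
          = ENNReal.ofReal (N * R ^ (-3*σ)) *
            ENNReal.ofReal ((2 : ℝ) ^ (-3*((k+2 : ℕ) : ℝ)*σ)) := by
        rw [← mul_assoc, ← ENNReal.ofReal_mul (by positivity), stmt3_real_calc d σ R hR k,
          ← ENNReal.ofReal_toReal hV1top.ne, ← ENNReal.ofReal_mul (by positivity),
          ← ENNReal.ofReal_mul (by positivity)]
        congr 1
        push_cast
        rw [hN]
        ring
      refine le_of_eq ?_
      rw [hvol, ← mul_assoc, key, mul_assoc]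
    calc (‖∫ y in {y : E | R^3 < ‖y‖}, f (x + y) * ‖y‖ ^ (-((d : ℝ) + σ))‖₊ : ℝ≥0∞)
        ≤ ∑' k, ∫⁻ y in A k,
            (‖f (x+y)‖₊ : ℝ≥0∞) * ENNReal.ofReal (‖y‖ ^ (-((d:ℝ)+σ))) ∂volume :=
          step1.trans step2
      _ ≤ ∑' k, ENNReal.ofReal (N * R ^ (-3*σ)) *
            (ENNReal.ofReal ((2 : ℝ) ^ (-3*((k+2 : ℕ) : ℝ)*σ)) * a (k+2)) :=
          ENNReal.tsum_le_tsum fun k =>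
            ((step3 k).trans (mul_le_mul_right (step4 k) _)).trans (step5 k)
      _ = ENNReal.ofReal (N * R ^ (-3*σ)) *
            ∑' k, ENNReal.ofReal ((2 : ℝ) ^ (-3*((k+2 : ℕ) : ℝ)*σ)) * a (k+2) :=
          ENNReal.tsum_mul_left
      _ ≤ ENNReal.ofReal (N * R ^ (-3*σ)) *
            ∑' m : ℕ, ENNReal.ofReal ((2 : ℝ) ^ (-3*(m : ℝ)*σ)) * a m := by
          refine mul_le_mul_right ?_ _
          exact ENNReal.tsum_comp_le_tsum_of_injective (add_left_injective 2)
            (fun m : ℕ => ENNReal.ofReal ((2 : ℝ) ^ (-3*(m : ℝ)*σ)) * a m)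
      _ = M := hM.symm
  -- conclude from the pointwise bound
  have hB0ne : volume (ball (0 : E) (R^3)) ≠ 0 := (measure_ball_pos _ _ hR3).ne'
  have hB0top : volume (ball (0 : E) (R^3)) ≠ ∞ := measure_ball_lt_top.ne
  calc (⨍⁻ x in ball (0 : E) (R^3),
          (‖∫ y in {y : E | R^3 < ‖y‖}, f (x + y) * ‖y‖ ^ (-((d : ℝ) + σ))‖₊ : ℝ≥0∞) ^ p
            ∂volume) ^ (1/p)
      ≤ (⨍⁻ _x in ball (0 : E) (R^3), M ^ p ∂volume) ^ (1/p) := by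
        refine ENNReal.rpow_le_rpow ?_ (by positivity)
        rw [setLAverage_eq, setLAverage_eq]
        refine ENNReal.div_le_div_right ?_ _
        exact setLIntegral_mono (measurable_const) fun x hx =>
          ENNReal.rpow_le_rpow (claim x hx) hp0.le
    _ = M := by
        rw [setLAverage_const hB0ne hB0top, ← ENNReal.rpow_mul,
          mul_one_div_cancel hp0.ne', ENNReal.rpow_one]
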